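/- Let G = (Ξ, Σ, Δ) be a grammar, X, Y ∈ Ξ, w ∈ Σ*, γ ∈ Δ*, and suppose X·Y ⇒^γ w is a k-index depth-first step sequence. Then there exist w_1, w_2 ∈ Σ* with w_1·w_2 = w and γ_1, γ_2 ∈ Δ* such that either (i) X ⇒^{γ_1} w_1 is a (k−1)-index depth-first derivation, Y ⇒^{γ_2} w_2 is a k-index depth-first derivation, and γ = γ_1·γ_2, or (ii) X ⇒^{γ_1} w_1 is a k-index depth-first derivation, Y ⇒^{γ_2} w_2 is a (k−1)-index depth-first derivation, and γ = γ_2·γ_1. -/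

import Mathlib

namespace Paper

/-- A word over nonterminals `N` and terminals `T`. -/
abbrev Word (N T : Type) := List (N ⊕ T)

/-- A production of a grammar. -/
abbrev CProd (N T : Type) := N × Word N T

/-- A grammar, given by its set of productions. -/
structure CFG (N T : Type) where
  prods : Set (CProd N T)

variable {N T : Type}

/-- number of occurrences of nonterminals in a word -/
def ntCount (u : Word N T) : ℕ := (u.filter (fun s => s.isLeft)).length

/-- number of occurrences of terminals in a word -/
def tCount (u : Word N T) : ℕ := (u.filter (fun s => s.isRight)).length

/-- the result of applying production `p` at position `j` of `u` -/
def applyProd (p : CProd N T) (j : ℕ) (u : Word N T) : Word N T :=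
  u.take j ++ p.2 ++ u.drop (j + 1)

/-- `KSeq G k u γjs v`: a step sequence from `u` to `v` applying the indicated
productions at the indicated positions, in which every word (including `u`, `v`)
has at most `k` occurrences of nonterminals (`k = ⊤` places no restriction). -/
inductive KSeq (G : CFG N T) (k : ℕ∞) : Word N T → List (CProd N T × ℕ) → Word N T → Prop
  | refl (u : Word N T) : (ntCount u : ℕ∞) ≤ k → KSeq G k u [] u
  | step {u v : Word N T} {p : CProd N T} {j : ℕ} {rest : List (CProd N T × ℕ)} :
      (ntCount u : ℕ∞) ≤ k → p ∈ G.prods → u[j]? = some (Sum.inl p.1) →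
      KSeq G k (applyProd p j u) rest v → KSeq G k u ((p, j) :: rest) v

/-- words annotated with the index of the step at which each symbol occurrence appeared -/
abbrev AWord (N T : Type) := List ((N ⊕ T) × ℕ)

def strip (u : AWord N T) : Word N T := u.map Prod.fst

def ntCountA (u : AWord N T) : ℕ := (u.filter (fun s => s.1.isLeft)).length

def applyProdA (p : CProd N T) (j m : ℕ) (u : AWord N T) : AWord N T :=
  u.take j ++ p.2.map (fun s => (s, m)) ++ u.drop (j + 1)

/-- the depth-first condition: position `j` carries a maximal first-appearance
index among the nonterminal occurrences of `u` -/
def dfOK (u : AWord N T) (j : ℕ) : Prop :=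
  ∀ (i : ℕ) x o, u[i]? = some (Sum.inl x, o) → ∀ s oj, u[j]? = some (s, oj) → o ≤ oj

/-- `DFSeq G k m u γjs v`: a `k`-index depth-first step sequence on annotated words,
where `m` is the index (in the whole sequence) of the current word `u`. -/
inductive DFSeq (G : CFG N T) (k : ℕ∞) : ℕ → AWord N T → List (CProd N T × ℕ) → AWord N T → Prop
  | refl (m : ℕ) (u : AWord N T) : (ntCountA u : ℕ∞) ≤ k → DFSeq G k m u [] u
  | step {m : ℕ} {u v : AWord N T} {p : CProd N T} {j o : ℕ} {rest : List (CProd N T × ℕ)} :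
      (ntCountA u : ℕ∞) ≤ k → p ∈ G.prods → u[j]? = some (Sum.inl p.1, o) →
      dfOK u j →
      DFSeq G k (m + 1) (applyProdA p j (m + 1) u) rest v →
      DFSeq G k m u ((p, j) :: rest) v

/-- `u ⇒^γ v` by a `k`-index step sequence (positions existentially quantified). -/
def CtrlSeq (G : CFG N T) (k : ℕ∞) (u : Word N T) (γ : List (CProd N T)) (v : Word N T) : Prop :=
  ∃ js : List ℕ, js.length = γ.length ∧ KSeq G k u (γ.zip js) v

/-- annotate a word as an initial word of a step sequence -/
def annot (u : Word N T) : AWord N T := u.map (fun s => (s, 0))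

/-- `u ⇒^γ v` by a `k`-index depth-first step sequence starting at `u`. -/
def DFCtrlFrom (G : CFG N T) (k : ℕ∞) (u : Word N T) (γ : List (CProd N T)) (v : Word N T) :
    Prop :=
  ∃ (js : List ℕ) (va : AWord N T),
    js.length = γ.length ∧ DFSeq G k 0 (annot u) (γ.zip js) va ∧ strip va = v

/-- embedding of terminal words -/
def tw (w : List T) : Word N T := w.map Sum.inr

/-- the sentential word `u Y v` where `u, v` are terminal and `Y` is an optional nonterminal -/
def sent (u : List T) (Y : Option N) (v : List T) : Word N T :=
  tw u ++ (Y.elim [] (fun y => [Sum.inl y])) ++ tw v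

/-- `L^{(k)}_{X,Y}(G) = { u·v | X ⇒* u Y v by a k-index step sequence }`;
`Y = none` stands for `ε`. -/
def LKY (G : CFG N T) (k : ℕ∞) (X : N) (Y : Option N) : Set (List T) :=
  {w | ∃ u v γ, w = u ++ v ∧ CtrlSeq G k [Sum.inl X] γ (sent u Y v)}

/-- `L_X(G)` -/
def Lang (G : CFG N T) (X : N) : Set (List T) := LKY G ⊤ X none

/-- `L^{(k)}_X(G)` -/
def LangK (G : CFG N T) (k : ℕ) (X : N) : Set (List T) := LKY G (k : ℕ∞) X none

/-- `Γ^{df(k)}_{X,Y}(G)`: control words of `k`-index depth-first step sequences `X ⇒^γ u Y v`. -/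
def GammaDF (G : CFG N T) (k : ℕ) (X : N) (Y : Option N) : Set (List (CProd N T)) :=
  {γ | ∃ u v : List T, DFCtrlFrom G (k : ℕ∞) [Sum.inl X] γ (sent u Y v)}

/-- `L̂_{X,Y}(Γ, G)` -/
def LHat (G : CFG N T) (Γ : Set (List (CProd N T))) (X : N) (Y : Option N) : Set (List T) :=
  {w | ∃ u v, w = u ++ v ∧ ∃ γ ∈ Γ, CtrlSeq G ⊤ [Sum.inl X] γ (sent u Y v)}

/-- the language of the bounded expression `w₁* ⋯ w_d*` -/
def BLang {α : Type} : List (List α) → Set (List α)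
  | [] => {[]}
  | w :: ws => {u | ∃ (n : ℕ) (v : List α), v ∈ BLang ws ∧ u = (List.replicate n w).flatten ++ v}

/-- the words of a bounded expression must be nonempty -/
def IsBExpr {α : Type} (ws : List (List α)) : Prop := ∀ w ∈ ws, w ≠ []

/-- the language of the letter-bounded expression `a₁* ⋯ a_d*` -/
def letterLang {α : Type} (as : List α) : Set (List α) := BLang (as.map (fun a => [a]))

/-- the language `a_i* ⋯ a_j*` (0-indexed segment of `as` from `i` to `j` inclusive) -/
def segLang {α : Type} (as : List α) (i j : ℕ) : Set (List α) :=
  letterLang ((as.drop i).take (j - i + 1))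

end Paper

namespace Paper

variable {N T : Type}

/-- ranked words over the nonterminals -/
abbrev RW (N : Type) := List (N × ℕ)

/-- the set of rank values is downward closed (equivalently, of the form `{0, …, m}`
when nonempty) -/
def contiguousRanks (q : RW N) : Prop := ∀ p ∈ q, ∀ j ≤ p.2, ∃ x : N, (x, j) ∈ q

/-- vertices of the graph `A^{df(k)}_G` -/
def IsVertex (k : ℕ) (q : RW N) : Prop :=
  q.length ≤ k ∧ contiguousRanks q ∧ List.Pairwise (· ≤ ·) (q.map Prod.snd)

/-- `w↓Ξ` : projection of a word to its nonterminals -/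
def ntProj (w : Word N T) : List N := w.filterMap Sum.getLeft?

open Classical in
/-- the rank given to the nonterminals produced by a step rewriting a nonterminal
of maximal rank `i`, where `uv` is the rest of the ranked word -/
noncomputable def newRank (uv : RW N) (i : ℕ) : ℕ :=
  if uv = [] then 0 else if ∀ p ∈ uv, p.2 ≠ i then i else i + 1

/-- the edge relation of the graph `A^{df(k)}_G` -/
def Edge (G : CFG N T) (k : ℕ) (q : RW N) (p : CProd N T) (q' : RW N) : Prop :=
  p ∈ G.prods ∧ IsVertex k q ∧ IsVertex k q' ∧
  ∃ (u v : RW N) (i : ℕ), q = u ++ [(p.1, i)] ++ v ∧ (∀ x ∈ q, x.2 ≤ i) ∧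
    q' = u ++ v ++ (ntProj p.2).map (fun X => (X, newRank (u ++ v) i))

/-- paths in a labeled graph, recording the sequence of edge labels -/
inductive GPath {V E : Type} (edge : V → E → V → Prop) : V → List E → V → Prop
  | refl (v : V) : GPath edge v [] v
  | step {v v' v'' : V} {e : E} {es : List E} :
      edge v e v' → GPath edge v' es v'' → GPath edge v (e :: es) v''

/-- paths recording the successive vertices as well -/
inductive VPath {V E : Type} (edge : V → E → V → Prop) : V → List (E × V) → Prop
  | refl (v : V) : VPath edge v []
  | step {v v' : V} {e : E} {rest : List (E × V)} :
      edge v e v' → VPath edge v' rest → VPath edge v ((e, v') :: rest)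

/-- endpoint of a path starting at `q` -/
def pend {V E : Type} (q : V) (π : List (E × V)) : V := (π.map Prod.snd).getLastD q

/-- a path is acyclic iff it visits no vertex twice -/
def AcyclicFrom {V E : Type} (q : V) (π : List (E × V)) : Prop :=
  (q :: π.map Prod.snd).Nodup

/-- `Decomp edge q pairs fin` asserts that the path obtained by concatenating, in order,
the segments of `pairs` (each an acyclic segment followed by a cycle) and `fin` is a valid
path from `q`, alternating acyclic segments `ς_j` and cycles `θ_j`. -/
def Decomp {V E : Type} (edge : V → E → V → Prop) :
    V → List (List (E × V) × List (E × V)) → List (E × V) → Prop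
  | q, [], fin => VPath edge q fin ∧ AcyclicFrom q fin
  | q, (σ, θ) :: rest, fin =>
      VPath edge q σ ∧ AcyclicFrom q σ ∧
      VPath edge (pend q σ) θ ∧ pend (pend q σ) θ = pend q σ ∧
      Decomp edge (pend q σ) rest fin

/-- `|γ|_a`: total number of occurrences of the terminal `a` in the right-hand
sides of the productions of the control word `γ` -/
def projCnt {A : Type} [DecidableEq A] (γ : List (CProd N A)) (a : A) : ℕ :=
  ((γ.map (fun p => p.2)).flatten.filterMap Sum.getRight?).count a

/-- `proj(γ) = a₁^{|γ|_{a₁}} ⋯ a_s^{|γ|_{a_s}}` -/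
def projW {A : Type} [DecidableEq A] (as : List A) (γ : List (CProd N A)) : List A :=
  (as.map (fun a => List.replicate (projCnt γ a) a)).flatten

end Paper

namespace Paper

variable {N T : Type}

/-- a grammar is in 2-normal form -/
def TwoNF (G : CFG N T) : Prop := ∀ p ∈ G.prods, p.2.length ≤ 2

/-- states of the automaton/grammar `G^b`: `(s, i)` encodes `q^{(s+1)}_{i+1}`,
i.e. position `i` (0-indexed) inside the block `s` (0-indexed) -/
abbrev QB : Type := ℕ × ℕ

/-- `ℓ_s`: length of the `s`-th word of the bounded expression -/
def lenB (ws : List (List T)) (s : ℕ) : ℕ := (ws.getD s []).length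

/-- the `i`-th letter of the `s`-th word -/
def letterB (ws : List (List T)) (s i : ℕ) : Option T := (ws.getD s [])[i]?

/-- the productions of the grammar `G^b` generating the bounded expression `b` -/
def DeltaB (ws : List (List T)) : Set (CProd QB T) :=
  {p | (∃ s i a, s < ws.length ∧ i + 1 < lenB ws s ∧ letterB ws s i = some a ∧
          p = ((s, i), [Sum.inr a, Sum.inl (s, i + 1)]))
     ∨ (∃ s s' a, s ≤ s' ∧ s' < ws.length ∧
          letterB ws s (lenB ws s - 1) = some a ∧
          p = ((s, lenB ws s - 1), [Sum.inr a, Sum.inl (s', 0)]))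
     ∨ (∃ s, s < ws.length ∧ p = ((s, 0), ([] : Word QB T)))}

/-- the grammar `G^b` -/
def GB (ws : List (List T)) : CFG QB T := ⟨DeltaB ws⟩

/-- nonterminals `[q X q']` of the product grammar `G^∩` -/
abbrev NI (N : Type) : Type := QB × N × QB

/-- `q ∈ Ξ^b` -/
def ValidQ (ws : List (List T)) (q : QB) : Prop :=
  q.1 < ws.length ∧ q.2 < lenB ws q.1

/-- `[q X q'] ∈ Ξ^∩`: both states valid and blocks in order -/
def ValidNI (ws : List (List T)) (n : NI N) : Prop :=
  ValidQ ws n.1 ∧ ValidQ ws n.2.2 ∧ n.1.1 ≤ n.2.2.1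

/-- `q ⇒* w·q'` in `G^b` -/
def DerB (ws : List (List T)) (q : QB) (w : List T) (q' : QB) : Prop :=
  ∃ γ, CtrlSeq (GB ws) ⊤ [Sum.inl q] γ (tw w ++ [Sum.inl q'])

/-- the productions `Δ^∩` of the product grammar `G^∩` -/
def DeltaI (G : CFG N T) (ws : List (List T)) : Set (CProd (NI N) T) :=
  {pp | ∃ (q q' : QB) (X : N), ValidNI ws (q, X, q') ∧
     ((∃ w : List T, (X, tw w) ∈ G.prods ∧ DerB ws q w q' ∧
         pp = ((q, X, q'), tw w)) ∨
      (∃ Y : N, (X, [Sum.inl Y]) ∈ G.prods ∧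
         pp = ((q, X, q'), [Sum.inl ((q, Y, q') : NI N)])) ∨
      (∃ (a : T) (Y : N) (qm : QB), (X, [Sum.inr a, Sum.inl Y]) ∈ G.prods ∧
         ((q, [Sum.inr a, Sum.inl qm]) : CProd QB T) ∈ DeltaB ws ∧ ValidNI ws (qm, Y, q') ∧
         pp = ((q, X, q'), [Sum.inr a, Sum.inl ((qm, Y, q') : NI N)])) ∨
      (∃ (a : T) (Y : N) (qm : QB), (X, [Sum.inl Y, Sum.inr a]) ∈ G.prods ∧
         ((qm, [Sum.inr a, Sum.inl q']) : CProd QB T) ∈ DeltaB ws ∧ ValidNI ws (q, Y, qm) ∧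
         pp = ((q, X, q'), [Sum.inl ((q, Y, qm) : NI N), Sum.inr a])) ∨
      (∃ (Y Z : N) (qm : QB), (X, [Sum.inl Y, Sum.inl Z]) ∈ G.prods ∧
         ValidNI ws (q, Y, qm) ∧ ValidNI ws (qm, Z, q') ∧
         pp = ((q, X, q'), [Sum.inl ((q, Y, qm) : NI N), Sum.inl ((qm, Z, q') : NI N)])))}

/-- the product grammar `G^∩` -/
def GI (G : CFG N T) (ws : List (List T)) : CFG (NI N) T := ⟨DeltaI G ws⟩

/-- `ζ` on symbols -/
def zetaS : (NI N ⊕ T) → (N ⊕ T) := Sum.map (fun n => n.2.1) id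

/-- `ζ` on productions -/
def zetaP (p : CProd (NI N) T) : CProd N T := (p.1.2.1, p.2.map zetaS)

/-- `ζ` on control words -/
def zetaC (γ : List (CProd (NI N) T)) : List (CProd N T) := γ.map zetaP

/-- the intermediate state of the (unique, shortest) two-step run of `G^b` from the
left state of `h` to its right state; when the first step wraps, the least possible
intermediate block is chosen -/
noncomputable def iotaMid (ws : List (List T)) (h : NI N) (a b : T) : QB :=
  if h.1.2 + 1 < lenB ws h.1.1 then (h.1.1, h.1.2 + 1)
  else (sInf {y : ℕ | (((h.1.1, h.1.2), [Sum.inr a, Sum.inl ((y, 0) : QB)]) : CProd QB T) ∈ DeltaB ws ∧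
                (((y, 0), [Sum.inr b, Sum.inl (h.2.2 : QB)]) : CProd QB T) ∈ DeltaB ws}, 0)

/-- `ι` on right-hand sides: relabels terminals by the indices (0-indexed) of the
blocks of `b` completed by the corresponding moves of `G^b`; `h` is the head of the
production -/
noncomputable def iotaRhs (ws : List (List T)) (h : NI N) :
    Word (NI N) T → Word (NI N) ℕ
  | [] => []
  | [Sum.inr _] => if h.2.2.2 = 0 then [Sum.inr h.1.1] else []
  | [Sum.inr a, Sum.inr b] =>
      (if (iotaMid ws h a b).2 = 0 then [Sum.inr h.1.1] else []) ++
      (if h.2.2.2 = 0 then [Sum.inr (iotaMid ws h a b).1] else [])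
  | [Sum.inr _, Sum.inl m] => (if m.1.2 = 0 then [Sum.inr h.1.1] else []) ++ [Sum.inl m]
  | [Sum.inl m, Sum.inr _] => [Sum.inl m] ++ (if h.2.2.2 = 0 then [Sum.inr m.2.2.1] else [])
  | other => other.map (Sum.map id (fun _ => 0))

/-- the map `ι : Δ^∩ → Δ^⋈` -/
noncomputable def iota (ws : List (List T)) (p : CProd (NI N) T) : CProd (NI N) ℕ :=
  (p.1, iotaRhs ws p.1 p.2)

/-- the grammar `G^⋈`, whose terminals are the (0-indexed) letters `a₁, …, a_d`
represented by natural numbers -/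
noncomputable def GBow (G : CFG N T) (ws : List (List T)) : CFG (NI N) ℕ :=
  ⟨iota ws '' DeltaI G ws⟩

end Paper

namespace Paper

variable {N A : Type}

/-- `Ξ̂`: nonterminals producing some word starting with `a₁` and some word ending
with `a_d` -/
def XiHat (G : CFG N A) (a1 ad : A) : Set N :=
  {Y | (∃ w ∈ Lang G Y, ∃ v, w = a1 :: v) ∧ (∃ w ∈ Lang G Y, ∃ v, w = v ++ [ad])}

/-- the grammar `G^♯` (here `S = Ξ̂`, and `Ξ̌` is its complement) -/
def GSharp (G : CFG N A) (S : Set N) : CFG N A :=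
  ⟨{p | p ∈ G.prods ∧ p.1 ∉ S} ∪
   {p | p ∈ G.prods ∧ p.1 ∈ S ∧ ∃ (u : Word N A) (Xr : N) (v : Word N A),
      Xr ∈ S ∧ p.2 = u ++ [Sum.inl Xr] ++ v}⟩

/-- the grammar `G_{i,w}` for a pivot production `piv` (here `S = Ξ̂`) -/
def GPivot (G : CFG N A) (S : Set N) (piv : CProd N A) : CFG N A :=
  ⟨{p | p ∈ G.prods ∧ p.1 ∉ S} ∪ {piv}⟩

/-- `G` is reduced for `X` -/
def Reduced (G : CFG N A) (X : N) : Prop :=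
  ∀ Y : N, Y ≠ X → (LKY G ⊤ X (some Y)).Nonempty ∧ (Lang G Y).Nonempty

/-- `a₁* ⋯ a_d*` (given by the list `as`) is the minimal strict letter-bounded
expression for `L_X(G)` -/
def MinimalLB (G : CFG N A) (X : N) (as : List A) : Prop :=
  Lang G X ⊆ letterLang as ∧ ∀ i < as.length, ¬ (Lang G X ⊆ letterLang (as.eraseIdx i))

/-- a symbol of `A ∪ {ε}` as a word -/
def optT (a : Option A) : Word N A := a.elim [] (fun x => [Sum.inr x])

/-- a symbol of `Ξ ∪ {ε}` as a word -/
def optN (y : Option N) : Word N A := y.elim [] (fun x => [Sum.inl x])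

/-- `y ⇒^γ u_y` is a (possibly empty) `k`-index depth-first derivation, where
`y ∈ Ξ ∪ {ε}`; for `y = ε` the derivation is empty -/
def optDFDer (H : CFG N A) (k : ℕ) (y : Option N) (γ : List (CProd N A)) : Prop :=
  match y with
  | some Y => ∃ w : List A, DFCtrlFrom H (k : ℕ∞) [Sum.inl Y] γ (tw w)
  | none => γ = []

/-- the grammar `G_k` with productions `X_i → X_{i-1} X_{i-1}` (1 ≤ i ≤ k) and `X_0 → a` -/
def Gk (k : ℕ) : CFG ℕ Unit :=
  ⟨{p | (∃ i, 1 ≤ i ∧ i ≤ k ∧ p = (i, [Sum.inl (i - 1), Sum.inl (i - 1)])) ∨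
        p = (0, [Sum.inr ()])}⟩

end Paper

/-! In a depth-first sequence from `X·Y`, the nonterminals created by the first step (which
rewrites `X` or `Y`) are younger than the other, untouched nonterminal. The depth-first rule
therefore keeps rewriting inside this block until it is terminal, while the untouched
nonterminal is still present: the block is derived by a `(k-1)`-index depth-first derivation.
What remains is the untouched nonterminal between terminal words, and its rewriting, with
first-appearance indices shifted back to start at `0`, is a `k`-index depth-first derivation. -/

namespace Paper

variable {N T : Type}

/- A step sequence running inside a frame `l ++ · ++ r` from step `c` on is read as a sequence
of its own by subtracting `l.length` from its positions and `c` from its indices. -/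

def shiftIdx (c : ℕ) (u : AWord N T) : AWord N T := u.map fun s => (s.1, s.2 - c)

def shiftPos (c : ℕ) (γjs : List (CProd N T × ℕ)) : List (CProd N T × ℕ) :=
  γjs.map fun pj => (pj.1, pj.2 - c)

lemma getElem?_append_append_eq_some {α : Type*} {l u r : List α} {j : ℕ} {s : α}
    (h : (l ++ u ++ r)[j]? = some s) : s ∈ l ++ r ∨ ∃ j', j = l.length + j' ∧ u[j']? = some s := by
  rw [List.getElem?_append, List.getElem?_append] at h
  split_ifs at h with h₁ h₂
  · exact .inl (List.mem_append_left _ (List.mem_of_getElem? h))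
  · exact .inr ⟨j - l.length, by omega, h⟩
  · exact .inl (List.mem_append_right _ (List.mem_of_getElem? h))

lemma ntCountA_append (u v : AWord N T) : ntCountA (u ++ v) = ntCountA u + ntCountA v := by
  simp [ntCountA, List.filter_append]

lemma ntCountA_eq_zero_iff {u : AWord N T} : ntCountA u = 0 ↔ ∀ x o, (Sum.inl x, o) ∉ u := by
  simp only [ntCountA, List.length_eq_zero_iff, List.filter_eq_nil_iff, Prod.forall]
  refine ⟨fun h x o hx => by simpa using h _ o hx, fun h s o hs => ?_⟩
  cases s with
  | inl x => exact absurd hs (h x o)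
  | inr a => simp

lemma ntCountA_strip (u : AWord N T) : ntCountA u = ntCount (strip u) := by
  simp [ntCountA, ntCount, strip, List.filter_map, Function.comp_def]

@[simp] lemma ntCount_tw (w : List T) : ntCount (tw w : Word N T) = 0 := by
  simp [ntCount, tw, List.filter_map, Function.comp_def]

lemma exists_strip_eq_tw {u : AWord N T} (h : ntCountA u = 0) : ∃ w : List T, strip u = tw w := by
  induction u with
  | nil => exact ⟨[], rfl⟩
  | cons s u ih =>
    obtain ⟨s | a, o⟩ := s
    · simp [ntCountA] at h
    · obtain ⟨w, hw⟩ := ih (by simpa [ntCountA] using h)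
      exact ⟨a :: w, by simp [strip, tw] at hw ⊢; exact hw⟩

lemma strip_append (u v : AWord N T) : strip (u ++ v) = strip u ++ strip v :=
  List.map_append

lemma tw_append (u v : List T) : (tw (u ++ v) : Word N T) = tw u ++ tw v :=
  List.map_append

lemma tw_injective : Function.Injective (tw : List T → Word N T) :=
  List.map_injective_iff.mpr fun _ _ h => Sum.inr.inj h

@[simp] lemma ntCountA_shiftIdx (c : ℕ) (u : AWord N T) : ntCountA (shiftIdx c u) = ntCountA u := by
  simp [ntCountA, shiftIdx, List.filter_map, Function.comp_def]

@[simp] lemma strip_shiftIdx (c : ℕ) (u : AWord N T) : strip (shiftIdx c u) = strip u := by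
  simp [strip, shiftIdx, Function.comp_def]

@[simp] lemma map_fst_shiftPos (c : ℕ) (γjs : List (CProd N T × ℕ)) :
    (shiftPos c γjs).map Prod.fst = γjs.map Prod.fst := by
  simp [shiftPos, Function.comp_def]

lemma mem_applyProdA {p : CProd N T} {j m : ℕ} {u : AWord N T} {s : (N ⊕ T) × ℕ}
    (h : s ∈ applyProdA p j m u) : s ∈ u ∨ s.2 = m := by
  simp only [applyProdA, List.mem_append, List.mem_map] at h
  rcases h with (h | ⟨_, _, rfl⟩) | h
  · exact .inl (List.mem_of_mem_take h)
  · exact .inr rfl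
  · exact .inl (List.mem_of_mem_drop h)

lemma applyProdA_append_append (p : CProd N T) (m : ℕ) (l u r : AWord N T) {j : ℕ}
    (hj : j < u.length) :
    applyProdA p (l.length + j) m (l ++ u ++ r) = l ++ applyProdA p j m u ++ r := by
  have h₁ : l.length + j + 1 - l.length = j + 1 := by omega
  have h₂ : j + 1 - u.length = 0 := by omega
  simp [applyProdA, List.take_append, List.drop_append, List.take_of_length_le, hj.le, h₁, h₂,
    List.drop_eq_nil_of_le (by omega : l.length ≤ l.length + j + 1)]

lemma shiftIdx_applyProdA (p : CProd N T) (j : ℕ) {c m : ℕ} (hc : c ≤ m) (u : AWord N T) :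
    shiftIdx c (applyProdA p j (m + 1) u) = applyProdA p j (m - c + 1) (shiftIdx c u) := by
  simp only [shiftIdx, applyProdA, List.map_append, List.map_map, List.map_take, List.map_drop]
  congr 3
  funext s
  simp
  omega

lemma dfOK.le_of_mem {u : AWord N T} {j : ℕ} (h : dfOK u j) {x : N} {o : ℕ}
    (hx : (Sum.inl x, o) ∈ u) {s : N ⊕ T} {oj : ℕ} (hj : u[j]? = some (s, oj)) : o ≤ oj := by
  obtain ⟨i, hi⟩ := List.mem_iff_getElem?.1 hx
  exact h i x o hi s oj hj

lemma dfOK.of_append_append {l u r : AWord N T} {j : ℕ} (h : dfOK (l ++ u ++ r) (l.length + j)) :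
    dfOK u j := by
  intro i x o hi s oj hj
  have hlift : ∀ {i a}, u[i]? = some a → (l ++ u ++ r)[l.length + i]? = some a := fun hi => by
    rw [List.append_assoc, List.getElem?_append_right (by omega), Nat.add_sub_cancel_left,
      List.getElem?_append_left (List.getElem?_eq_some_iff.1 hi).1]
    exact hi
  exact h _ x o (hlift hi) s oj (hlift hj)

lemma dfOK.shiftIdx {u : AWord N T} {j : ℕ} (h : dfOK u j) (c : ℕ) : dfOK (shiftIdx c u) j := by
  intro i x o hi s oj hj
  simp only [Paper.shiftIdx, List.getElem?_map, Option.map_eq_some_iff, Prod.mk.injEq] at hi hj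
  obtain ⟨⟨_, o₁⟩, hi, rfl, rfl⟩ := hi
  obtain ⟨⟨_, o₂⟩, hj, rfl, rfl⟩ := hj
  have := h i x o₁ hi _ o₂ hj
  omega

section

variable {G : CFG N T} {k : ℕ∞}

lemma DFSeq.eq_of_ntCountA_eq_zero {m : ℕ} {u v : AWord N T} {γjs : List (CProd N T × ℕ)}
    (h : DFSeq G k m u γjs v) (hu : ntCountA u = 0) : γjs = [] ∧ v = u := by
  cases h with
  | refl => exact ⟨rfl, rfl⟩
  | step _ _ hget => exact absurd (List.mem_of_getElem? hget) (ntCountA_eq_zero_iff.1 hu _ _)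

lemma DFSeq.shiftIdx {m c : ℕ} {u v : AWord N T} {γjs : List (CProd N T × ℕ)}
    (h : DFSeq G k m u γjs v) (hc : c ≤ m) :
    DFSeq G k (m - c) (shiftIdx c u) γjs (shiftIdx c v) := by
  induction h with
  | refl m u hk => exact .refl _ _ (by simpa using hk)
  | @step m u v p j o rest hk hp hget hdf _ ih =>
    refine .step (o := o - c) (by simpa using hk) hp (by simp [Paper.shiftIdx, hget])
      (hdf.shiftIdx c) ?_
    rw [← shiftIdx_applyProdA p j hc, show m - c + 1 = m + 1 - c by omega]
    exact ih (by omega)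

lemma DFSeq.dfCtrlFrom {u : Word N T} {v : AWord N T} {γjs : List (CProd N T × ℕ)}
    (h : DFSeq G k 0 (annot u) γjs v) : DFCtrlFrom G k u (γjs.map Prod.fst) (strip v) :=
  ⟨γjs.map Prod.snd, v, by simp, by rwa [← List.zip_of_prod rfl rfl], rfl⟩

lemma ntCountA_le_sub {l u r : AWord N T} (h : (ntCountA (l ++ u ++ r) : ℕ∞) ≤ k) :
    (ntCountA u : ℕ∞) ≤ k - ntCountA (l ++ r) := by
  refine ENat.le_sub_of_add_le_left (ENat.natCast_ne_top _) ?_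
  simpa [ntCountA_append, add_comm, add_left_comm, add_assoc] using h

lemma DFSeq.exists_split_of_frame {l r u v : AWord N T} {m : ℕ} {γjs : List (CProd N T × ℕ)}
    (h : DFSeq G k m (l ++ u ++ r) γjs v) (hv : ntCountA v = 0)
    (hctx : ∀ x o, (Sum.inl x, o) ∈ l ++ r → o ≤ m ∧ ∀ y o', (Sum.inl y, o') ∈ u → o < o') :
    ∃ γ₁ γ₂ wa, γjs = γ₁ ++ γ₂ ∧ ntCountA wa = 0 ∧
      DFSeq G (k - ntCountA (l ++ r)) m u (shiftPos l.length γ₁) wa ∧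
      DFSeq G k (m + γ₁.length) (l ++ wa ++ r) γ₂ v := by
  induction γjs generalizing m u with
  | nil =>
    obtain ⟨_, _, hk⟩ := h
    have hu : ntCountA u = 0 := by simp only [ntCountA_append] at hv; omega
    exact ⟨[], [], u, rfl, hu, .refl m u (by simp [hu]), .refl _ _ hk⟩
  | cons pj rest ih =>
    by_cases hu : ntCountA u = 0
    · exact ⟨[], pj :: rest, u, rfl, hu, .refl m u (by simp [hu]), by simpa using h⟩
    obtain ⟨p, j⟩ := pj
    obtain _ | ⟨hk, hp, hget, hdf, htail⟩ := h
    obtain ⟨y, o', hy⟩ : ∃ y o', (Sum.inl y, o') ∈ u := by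
      simpa [ntCountA_eq_zero_iff] using hu
    -- a nonterminal of the context is older than `y`, so depth-first forbids rewriting it
    obtain ⟨j, rfl, hgetu⟩ : ∃ j', j = l.length + j' ∧ u[j']? = some (Sum.inl p.1, _) := by
      refine (getElem?_append_append_eq_some hget).resolve_left fun hmem => ?_
      have hle := hdf.le_of_mem (List.mem_append_left _ (List.mem_append_right _ hy)) hget
      exact absurd ((hctx _ _ hmem).2 y o' hy) (not_lt.2 hle)
    rw [applyProdA_append_append p (m + 1) l u r (List.getElem?_eq_some_iff.1 hgetu).1] at htail
    have hctx' : ∀ x o, (Sum.inl x, o) ∈ l ++ r →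
        o ≤ m + 1 ∧ ∀ y o', (Sum.inl y, o') ∈ applyProdA p j (m + 1) u → o < o' := by
      refine fun x o hmem => ⟨(hctx x o hmem).1.trans m.le_succ, fun y o' hy' => ?_⟩
      rcases mem_applyProdA hy' with hy' | rfl
      · exact (hctx x o hmem).2 y o' hy'
      · exact Nat.lt_succ_of_le (hctx x o hmem).1
    obtain ⟨γ₁, γ₂, wa, rfl, hwa, h₁, h₂⟩ := ih htail hctx'
    refine ⟨(p, l.length + j) :: γ₁, γ₂, wa, rfl, hwa, ?_, ?_⟩
    · rw [shiftPos, List.map_cons, Nat.add_sub_cancel_left]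
      exact .step (ntCountA_le_sub hk) hp hgetu hdf.of_append_append h₁
    · simpa [add_assoc, add_comm 1] using h₂

lemma dfOK_singleton (a : (N ⊕ T) × ℕ) : dfOK [a] 0 := by
  rintro (_ | i) x o hi s oj hj
  · simp_all
  · simp at hi

lemma DFSeq.exists_split_first {l r : AWord N T} {A : N} {p : CProd N T}
    {rest : List (CProd N T × ℕ)} {v : AWord N T}
    (h : DFSeq G k 0 (l ++ [(Sum.inl A, 0)] ++ r) ((p, l.length) :: rest) v)
    (hv : ntCountA v = 0) (hlr : ∀ s ∈ l ++ r, s.2 = 0) :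
    ∃ γ₁ γ₂ wa, rest = γ₁ ++ γ₂ ∧ ntCountA wa = 0 ∧
      DFCtrlFrom G (k - ntCountA (l ++ r)) [Sum.inl A] (p :: γ₁.map Prod.fst) (strip wa) ∧
      DFSeq G k (1 + γ₁.length) (l ++ wa ++ r) γ₂ v := by
  obtain _ | ⟨hk, hp, hget, -, htail⟩ := h
  obtain ⟨B, rhs⟩ := p
  obtain ⟨rfl, -⟩ : A = B ∧ 0 = _ := by simpa using hget
  have happ := applyProdA_append_append (A, rhs) 1 l [(Sum.inl A, 0)] r (j := 0) (by simp)
  rw [add_zero] at happ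
  rw [happ, show applyProdA (A, rhs) 0 1 [(Sum.inl A, 0)] = rhs.map (·, 1) by simp [applyProdA]]
    at htail
  obtain ⟨γ₁, γ₂, wa, rfl, hwa, h₁, h₂⟩ := htail.exists_split_of_frame hv fun x o hmem => by
    obtain rfl : o = 0 := hlr _ hmem
    simp
  refine ⟨γ₁, γ₂, wa, rfl, hwa, ?_, by rwa [zero_add] at h₂⟩
  have hA : DFSeq G (k - ntCountA (l ++ r)) 0 [(Sum.inl A, 0)]
      (((A, rhs), 0) :: shiftPos l.length γ₁) wa :=
    .step (ntCountA_le_sub hk) hp rfl (dfOK_singleton _) (by simpa [applyProdA] using h₁)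
  simpa using hA.dfCtrlFrom (u := [Sum.inl A])

lemma DFSeq.exists_of_terminal_context {l r : AWord N T} {Z : N} {m : ℕ}
    {γjs : List (CProd N T × ℕ)} {v : AWord N T}
    (h : DFSeq G k m (l ++ [(Sum.inl Z, 0)] ++ r) γjs v)
    (hl : ntCountA l = 0) (hr : ntCountA r = 0) (hv : ntCountA v = 0) :
    ∃ v', v = l ++ v' ++ r ∧ ntCountA v' = 0 ∧
      DFCtrlFrom G k [Sum.inl Z] (γjs.map Prod.fst) (strip v') := by
  have hlr : ntCountA (l ++ r) = 0 := by simp [ntCountA_append, hl, hr]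
  obtain ⟨γ₁, γ₂, v', rfl, hv', h₁, h₂⟩ := h.exists_split_of_frame hv fun x o hmem =>
    absurd hmem (ntCountA_eq_zero_iff.1 hlr x o)
  obtain ⟨rfl, rfl⟩ := h₂.eq_of_ntCountA_eq_zero (by simp [ntCountA_append, hl, hr, hv'])
  refine ⟨v', rfl, hv', ?_⟩
  rw [hlr, Nat.cast_zero, tsub_zero] at h₁
  have hZ : DFSeq G k 0 [(Sum.inl Z, 0)] (shiftPos l.length γ₁) (Paper.shiftIdx m v') := by
    simpa [Paper.shiftIdx] using h₁.shiftIdx le_rfl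
  simpa using hZ.dfCtrlFrom (u := [Sum.inl Z])

end

/-- Lemma 5: if `X·Y ⇒^γ w` is a `k`-index depth-first step sequence,
then `w = w₁·w₂` and either `γ = γ₁·γ₂` with `X ⇒^{γ₁} w₁` a `(k-1)`-index and
`Y ⇒^{γ₂} w₂` a `k`-index depth-first derivation, or symmetrically `γ = γ₂·γ₁`. -/
theorem split_lemma {N T : Type} (G : CFG N T) (X Y : N) (w : List T)
    (γ : List (CProd N T)) (k : ℕ)
    (h : DFCtrlFrom G (k : ℕ∞) [Sum.inl X, Sum.inl Y] γ (tw w)) :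
    ∃ (w1 w2 : List T) (γ1 γ2 : List (CProd N T)), w = w1 ++ w2 ∧
      ((DFCtrlFrom G ((k - 1 : ℕ) : ℕ∞) [Sum.inl X] γ1 (tw w1) ∧
        DFCtrlFrom G (k : ℕ∞) [Sum.inl Y] γ2 (tw w2) ∧ γ = γ1 ++ γ2) ∨
       (DFCtrlFrom G (k : ℕ∞) [Sum.inl X] γ1 (tw w1) ∧
        DFCtrlFrom G ((k - 1 : ℕ) : ℕ∞) [Sum.inl Y] γ2 (tw w2) ∧ γ = γ2 ++ γ1)) := by
  obtain ⟨js, va, hlen, hzip, hva⟩ := h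
  obtain ⟨L, hseq, rfl⟩ : ∃ L, DFSeq G k 0 [(Sum.inl X, 0), (Sum.inl Y, 0)] L va ∧
      γ = L.map Prod.fst := ⟨_, hzip, (List.map_fst_zip hlen.symm.le).symm⟩
  clear hzip hlen
  have hva0 : ntCountA va = 0 := by rw [ntCountA_strip, hva, ntCount_tw]
  have hk_sub_one (Z : N) :
      (k : ℕ∞) - ntCountA ([(Sum.inl Z, 0)] : AWord N T) = ((k - 1 : ℕ) : ℕ∞) := by
    rw [ENat.natCast_sub, Nat.cast_one]; rfl
  obtain _ | ⟨⟨p, _ | _ | j⟩, rest⟩ := L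
  · cases hseq
    simp [ntCountA] at hva0
  · obtain ⟨γ₁, γ₂, wa, rfl, hwa, hX, htail⟩ :=
      DFSeq.exists_split_first (l := []) (r := [(Sum.inl Y, 0)]) hseq hva0 (by simp)
    obtain ⟨vY, rfl, hvY, hY⟩ := DFSeq.exists_of_terminal_context (l := wa) (r := [])
      (by simpa using htail) hwa rfl hva0
    obtain ⟨w₁, hw₁⟩ := exists_strip_eq_tw hwa
    obtain ⟨w₂, hw₂⟩ := exists_strip_eq_tw hvY
    refine ⟨w₁, w₂, _, _, tw_injective (N := N) ?_,
      .inl ⟨by simpa [hk_sub_one, hw₁] using hX, hw₂ ▸ hY, by simp⟩⟩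
    rw [← hva, tw_append, ← hw₁, ← hw₂, List.append_nil, strip_append]
  · obtain ⟨γ₁, γ₂, wa, rfl, hwa, hY, htail⟩ :=
      DFSeq.exists_split_first (l := [(Sum.inl X, 0)]) (r := []) hseq hva0 (by simp)
    obtain ⟨vX, rfl, hvX, hX⟩ := DFSeq.exists_of_terminal_context (l := []) (r := wa)
      (by simpa using htail) rfl hwa hva0
    obtain ⟨w₁, hw₁⟩ := exists_strip_eq_tw hvX
    obtain ⟨w₂, hw₂⟩ := exists_strip_eq_tw hwa
    refine ⟨w₁, w₂, _, _, tw_injective (N := N) ?_,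
      .inr ⟨hw₁ ▸ hX, by simpa [hk_sub_one, hw₂] using hY, by simp⟩⟩
    rw [← hva, tw_append, ← hw₁, ← hw₂, List.nil_append, strip_append]
  · cases hseq with
    | step _ _ hget => simp at hget

end Paper
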